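/- Let X be a locally compact, connected Hausdorff space and ρ a quasi-integral on C_c(X). The following are equivalent: (i) ρ is simple, i.e., the corresponding topological measure μ_ρ takes only the values 0 and 1; (ii) for every f ∈ C_c(X) and every continuous function φ : ℝ → ℝ with φ(0) = 0 one has ρ(φ ∘ f) = φ(ρ(f)); (iii) ρ is multiplicative on each singly generated subalgebra, i.e., for each f ∈ C_c(X), ρ(g·h) = ρ(g)·ρ(h) for all g, h ∈ B(f). -/

import Mathlib

open scoped ENNReal CompactlySupported
open CompactlySupportedContinuousMap

namespace QLF

variable {X Y : Type*}

/-- Membership in the singly generated subalgebra `B(f)`: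
`g ∈ B(f)` iff `g = φ ∘ f` for some continuous `φ` with `φ 0 = 0`. -/
def InB [TopologicalSpace X] (f g : C_c(X, ℝ)) : Prop :=
  ∃ φ : C(ℝ, ℝ), φ 0 = 0 ∧ ∀ x, g x = φ (f x)

/-- A quasi-integral (quasi-linear functional) on `C_c(X)`. -/
structure IsQuasiIntegral [TopologicalSpace X] (ρ : C_c(X, ℝ) → ℝ) : Prop where
  smul : ∀ (a : ℝ) (f : C_c(X, ℝ)), ρ (a • f) = a * ρ f
  add : ∀ f g h : C_c(X, ℝ), InB f g → InB f h → ρ (g + h) = ρ g + ρ h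
  pos : ∀ f : C_c(X, ℝ), (∀ x, 0 ≤ f x) → 0 ≤ ρ f

/-- The value of the topological measure corresponding to `ρ` on an open set. -/
noncomputable def qiOpen [TopologicalSpace X] (ρ : C_c(X, ℝ) → ℝ) (U : Set X) : ℝ≥0∞ :=
  ⨆ (f : C_c(X, ℝ)) (_ : (∀ x, 0 ≤ f x ∧ f x ≤ 1) ∧ tsupport f ⊆ U), ENNReal.ofReal (ρ f)

open Classical in
/-- The topological measure corresponding to a quasi-integral `ρ`:
on open sets given by `qiOpen`, on other (closed) sets by outer regularity. -/
noncomputable def qiMeas [TopologicalSpace X] (ρ : C_c(X, ℝ) → ℝ) (A : Set X) : ℝ≥0∞ :=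
  if IsOpen A then qiOpen ρ A
  else ⨅ (U : Set X) (_ : IsOpen U ∧ A ⊆ U), qiOpen ρ U

/-- A topological measure on `X` (as a set function on all sets; only its values on
open and closed sets are constrained/meaningful). -/
def IsTopMeasure [TopologicalSpace X] (μ : Set X → ℝ≥0∞) : Prop :=
  (∀ A B : Set X, Disjoint A B → (IsCompact A ∨ IsOpen A) → (IsCompact B ∨ IsOpen B) →
      (IsCompact (A ∪ B) ∨ IsOpen (A ∪ B)) → μ (A ∪ B) = μ A + μ B) ∧
  (∀ U : Set X, IsOpen U → μ U = ⨆ (K : Set X) (_ : IsCompact K ∧ K ⊆ U), μ K) ∧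
  (∀ F : Set X, IsClosed F → μ F = ⨅ (U : Set X) (_ : IsOpen U ∧ F ⊆ U), μ U)

/-- A simple topological measure: assumes only the values 0 and 1 on open and closed sets. -/
def IsSimpleTM [TopologicalSpace X] (μ : Set X → ℝ≥0∞) : Prop :=
  IsTopMeasure μ ∧ ∀ A : Set X, IsOpen A ∨ IsClosed A → μ A = 0 ∨ μ A = 1

/-- A simple quasi-integral: its corresponding topological measure assumes only 0 and 1. -/
def IsSimpleQI [TopologicalSpace X] (ρ : C_c(X, ℝ) → ℝ) : Prop :=
  ∀ A : Set X, IsOpen A ∨ IsClosed A → qiMeas ρ A = 0 ∨ qiMeas ρ A = 1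

/-- An almost simple quasi-integral: its corresponding topological measure is a positive
scalar multiple of a simple topological measure. -/
def IsAlmostSimpleQI [TopologicalSpace X] (ρ : C_c(X, ℝ) → ℝ) : Prop :=
  ∃ (c : ℝ≥0∞) (μ' : Set X → ℝ≥0∞), 0 < c ∧ c ≠ ∞ ∧ IsSimpleTM μ' ∧
    ∀ A : Set X, IsOpen A ∨ IsClosed A → qiMeas ρ A = c * μ' A

/-- The composition `φ ∘ f` as an element of `C_c(X, ℝ)`, for continuous `φ` with `φ 0 = 0`. -/
noncomputable def compCc [TopologicalSpace X] (φ : C(ℝ, ℝ)) (hφ : φ 0 = 0)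
    (f : C_c(X, ℝ)) : C_c(X, ℝ) :=
  ⟨⟨fun x => φ (f x), φ.continuous.comp f.continuous⟩, f.hasCompactSupport'.comp_left hφ⟩

section Products

variable [TopologicalSpace X] [TopologicalSpace Y]

/-- The section `f_y ∈ C_c(X)` of `f ∈ C_c(X × Y)`, `f_y (x) = f (x, y)`. -/
noncomputable def fiberY [T2Space X] (f : C_c(X × Y, ℝ)) (y : Y) : C_c(X, ℝ) :=
  ⟨⟨fun x => f (x, y), f.continuous.comp (continuous_id.prodMk continuous_const)⟩,
    HasCompactSupport.intro (f.hasCompactSupport'.image continuous_fst)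
      (fun x hx => by
        by_contra h
        exact hx ⟨(x, y), subset_tsupport _ h, rfl⟩)⟩

/-- The section `f_x ∈ C_c(Y)` of `f ∈ C_c(X × Y)`, `f_x (y) = f (x, y)`. -/
noncomputable def fiberX [T2Space Y] (f : C_c(X × Y, ℝ)) (x : X) : C_c(Y, ℝ) :=
  ⟨⟨fun y => f (x, y), f.continuous.comp (continuous_const.prodMk continuous_id)⟩,
    HasCompactSupport.intro (f.hasCompactSupport'.image continuous_snd)
      (fun y hy => by
        by_contra h
        exact hy ⟨(x, y), subset_tsupport _ h, rfl⟩)⟩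

/-- `T_ρ(f) (y) = ρ (f_y)` as a bare function on `Y`. -/
noncomputable def Tmap [T2Space X] (ρ : C_c(X, ℝ) → ℝ) (f : C_c(X × Y, ℝ)) : Y → ℝ :=
  fun y => ρ (fiberY f y)

/-- `S_η(f) (x) = η (f_x)` as a bare function on `X`. -/
noncomputable def Smap [T2Space Y] (η : C_c(Y, ℝ) → ℝ) (f : C_c(X × Y, ℝ)) : X → ℝ :=
  fun x => η (fiberX f x)

open Classical in
/-- `T_ρ(f)` as an element of `C_c(Y, ℝ)` (when `ρ` is a quasi-integral, `T_ρ(f)` is indeed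
continuous with compact support, and this definition takes the first branch). -/
noncomputable def TCc [T2Space X] (ρ : C_c(X, ℝ) → ℝ) (f : C_c(X × Y, ℝ)) : C_c(Y, ℝ) :=
  if h : Continuous (Tmap ρ f) ∧ HasCompactSupport (Tmap ρ f)
  then ⟨⟨Tmap ρ f, h.1⟩, h.2⟩ else 0

open Classical in
/-- `S_η(f)` as an element of `C_c(X, ℝ)`. -/
noncomputable def SCc [T2Space Y] (η : C_c(Y, ℝ) → ℝ) (f : C_c(X × Y, ℝ)) : C_c(X, ℝ) :=
  if h : Continuous (Smap η f) ∧ HasCompactSupport (Smap η f)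
  then ⟨⟨Smap η f, h.1⟩, h.2⟩ else 0

/-- The repeated quasi-integral `(η × ρ) (f) = η (T_ρ (f))`. -/
noncomputable def prodQI [T2Space X] (η : C_c(Y, ℝ) → ℝ) (ρ : C_c(X, ℝ) → ℝ) :
    C_c(X × Y, ℝ) → ℝ := fun f => η (TCc ρ f)

/-- The repeated quasi-integral `(ρ × η) (f) = ρ (S_η (f))`. -/
noncomputable def prodQI' [T2Space Y] (ρ : C_c(X, ℝ) → ℝ) (η : C_c(Y, ℝ) → ℝ) :
    C_c(X × Y, ℝ) → ℝ := fun f => ρ (SCc η f)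

/-- The tensor product `(g ⊗ h) (x, y) = g (x) * h (y)` as an element of `C_c(X × Y, ℝ)`. -/
noncomputable def tensor (g : C_c(X, ℝ)) (h : C_c(Y, ℝ)) : C_c(X × Y, ℝ) :=
  ⟨⟨fun p => g p.1 * h p.2,
      (g.continuous.comp continuous_fst).mul (h.continuous.comp continuous_snd)⟩,
    HasCompactSupport.intro' (g.hasCompactSupport'.prod h.hasCompactSupport')
      ((isClosed_tsupport _).prod (isClosed_tsupport _))
      (fun p hp => by
        rcases not_and_or.mp (by simpa [Set.mem_prod] using hp) with h1 | h1
        · simp [image_eq_zero_of_notMem_tsupport h1]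
        · simp [image_eq_zero_of_notMem_tsupport h1])⟩

end Products

/-- A topological measure is subadditive (equivalently, extends to a Borel measure). -/
def IsSubadditiveOnOpens [TopologicalSpace X] (μ : Set X → ℝ≥0∞) : Prop :=
  ∀ U V : Set X, IsOpen U → IsOpen V → μ (U ∪ V) ≤ μ U + μ V

/-- `μ` is a positive scalar multiple of a point mass `δ_{x₀}` (on open and closed sets). -/
def IsPointMassMultiple [TopologicalSpace X] (μ : Set X → ℝ≥0∞) : Prop :=
  ∃ (c : ℝ≥0∞) (x₀ : X), 0 < c ∧ c ≠ ∞ ∧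
    ∀ A : Set X, IsOpen A ∨ IsClosed A →
      μ A = c * A.indicator (fun _ => (1 : ℝ≥0∞)) x₀

end QLF

/-!
Write `μ` for the topological measure of `ρ`. For (i) ⇒ (ii), `μ` is additive on disjoint open
sets, and `ρ` satisfies Markov's inequality `t μ {g > t} ≤ ρ g` for `g ≥ 0`, together with the
reverse bound `ρ g ≤ s` when `μ {g > s} = 0` and `μ X ≤ 1`. For simple `ρ` these give
`μ {f > t} = 0` for `t > ρ f` and `μ {f < t} = 0` for `t < ρ f`, and a tent-function argument
inside `B(f)` shows `μ {|f - ρ f| < δ} = 1` whenever `ρ f ≠ 0`. Hence `φ ∘ f` concentrates at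
`φ (ρ f)` in the sense of `μ`, which forces `ρ (φ ∘ f) = φ (ρ f)`. Property (ii) gives (iii) since
`B(f)` consists of the `φ ∘ f`. Finally (iii) gives `ρ (h ^ 2) = (ρ h) ^ 2`, so `m = μ U` satisfies
`m ≤ 1` and, by passing to `√h`, `m ≤ m ^ 2`: thus `m ∈ {0, 1}`.
-/

open Set

namespace QLF

section

variable {X : Type*} [TopologicalSpace X] {ρ : C_c(X, ℝ) → ℝ}

lemma inB_self (f : C_c(X, ℝ)) : InB f f :=
  ⟨ContinuousMap.id ℝ, rfl, fun _ => rfl⟩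

lemma inB_compCc (φ : C(ℝ, ℝ)) (hφ : φ 0 = 0) (f : C_c(X, ℝ)) : InB f (compCc φ hφ f) :=
  ⟨φ, hφ, fun _ => rfl⟩

lemma InB.add {f g h : C_c(X, ℝ)} (hg : InB f g) (hh : InB f h) : InB f (g + h) := by
  obtain ⟨φ, hφ0, hφ⟩ := hg
  obtain ⟨ψ, hψ0, hψ⟩ := hh
  exact ⟨φ + ψ, by simp [hφ0, hψ0], fun x => by simp [hφ, hψ]⟩

lemma InB.smul {f g : C_c(X, ℝ)} (hg : InB f g) (a : ℝ) : InB f (a • g) := by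
  obtain ⟨φ, hφ0, hφ⟩ := hg
  exact ⟨a • φ, by simp [hφ0], fun x => by simp [hφ]⟩

lemma IsQuasiIntegral.map_zero (hρ : IsQuasiIntegral ρ) : ρ 0 = 0 := by
  simpa using hρ.smul 0 0

lemma IsQuasiIntegral.map_neg (hρ : IsQuasiIntegral ρ) (f : C_c(X, ℝ)) : ρ (-f) = -ρ f := by
  rw [← neg_one_smul ℝ f, hρ.smul, neg_one_mul]

lemma IsQuasiIntegral.mono_of_inB (hρ : IsQuasiIntegral ρ) {f g h : C_c(X, ℝ)}
    (hg : InB f g) (hh : InB f h) (hle : ∀ x, g x ≤ h x) : ρ g ≤ ρ h := by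
  have hdiff : InB f (h - g) := by
    convert hh.add (hg.smul (-1)) using 1
    ext x
    simp [sub_eq_add_neg]
  have hsum := hρ.add f g (h - g) hg hdiff
  rw [add_sub_cancel] at hsum
  have := hρ.pos (h - g) fun x => by simpa using hle x
  linarith

lemma IsQuasiIntegral.map_posPart_sub_negPart (hρ : IsQuasiIntegral ρ) (f : C_c(X, ℝ)) :
    ρ f = ρ f⁺ - ρ f⁻ := by
  have hpos : InB f f⁺ := inB_compCc ⟨fun s => max s 0, by fun_prop⟩ (by simp) f
  have hneg : InB f ((-1 : ℝ) • f⁻) :=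
    ⟨⟨fun s => min s 0, by fun_prop⟩, by simp, fun x => by
      change -1 * max (-f x) 0 = min (f x) 0
      rcases le_total (f x) 0 with h | h <;> simp [h]⟩
  have := hρ.add f _ _ hpos hneg
  rw [hρ.smul, neg_one_smul ℝ f⁻, ← sub_eq_add_neg, posPart_sub_negPart] at this
  linarith

/-- Nonnegative functions with disjoint supports lie in the singly generated algebra of their
difference. -/
lemma IsQuasiIntegral.map_add_of_disjoint (hρ : IsQuasiIntegral ρ) {g₁ g₂ : C_c(X, ℝ)}
    (h₁ : ∀ x, 0 ≤ g₁ x) (h₂ : ∀ x, 0 ≤ g₂ x) (hd : ∀ x, g₁ x = 0 ∨ g₂ x = 0) :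
    ρ (g₁ + g₂) = ρ g₁ + ρ g₂ := by
  refine hρ.add (g₁ - g₂) g₁ g₂
    ⟨⟨fun s => max s 0, by fun_prop⟩, by simp, fun x => ?_⟩
    ⟨⟨fun s => max (-s) 0, by fun_prop⟩, by simp, fun x => ?_⟩ <;>
  rcases hd x with h | h <;> simp [h, h₁ x, h₂ x]

/-- The comparison of `h` and `w` takes place in the singly generated algebra of `h + w`, where
`h = (h + w - 1)⁺` and `w = min (h + w) 1`. -/
lemma IsQuasiIntegral.map_le_of_eq_one_on (hρ : IsQuasiIntegral ρ) {h w : C_c(X, ℝ)} {U : Set X}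
    (hh : ∀ x, 0 ≤ h x ∧ h x ≤ 1) (hsupp : tsupport h ⊆ U)
    (hw : ∀ x, 0 ≤ w x ∧ w x ≤ 1) (hw1 : ∀ x ∈ U, w x = 1) : ρ h ≤ ρ w := by
  have hzero : ∀ x ∉ U, h x = 0 := fun x hx =>
    image_eq_zero_of_notMem_tsupport fun hc => hx (hsupp hc)
  have key : ∀ x, (x ∈ U ∧ w x = 1) ∨ (x ∉ U ∧ h x = 0) := fun x => by
    by_cases hx : x ∈ U
    exacts [Or.inl ⟨hx, hw1 x hx⟩, Or.inr ⟨hx, hzero x hx⟩]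
  refine hρ.mono_of_inB (f := h + w)
    ⟨⟨fun s => max (s - 1) 0, by fun_prop⟩, by norm_num, fun x => ?_⟩
    ⟨⟨fun s => min s 1, by fun_prop⟩, by norm_num, fun x => ?_⟩ fun x => ?_ <;>
  rcases key x with ⟨-, hx⟩ | ⟨-, hx⟩ <;>
  simp [hx, (hh x).1, (hh x).2, (hw x).1, (hw x).2]

lemma le_qiOpen {U : Set X} {h : C_c(X, ℝ)} (hh : ∀ x, 0 ≤ h x ∧ h x ≤ 1)
    (hsupp : tsupport h ⊆ U) : ENNReal.ofReal (ρ h) ≤ qiOpen ρ U :=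
  le_iSup₂_of_le (f := fun (h : C_c(X, ℝ)) (_ : (∀ x, 0 ≤ h x ∧ h x ≤ 1) ∧ tsupport h ⊆ U) =>
    ENNReal.ofReal (ρ h)) h ⟨hh, hsupp⟩ le_rfl

lemma qiOpen_le {U : Set X} {c : ℝ≥0∞}
    (H : ∀ h : C_c(X, ℝ), (∀ x, 0 ≤ h x ∧ h x ≤ 1) → tsupport h ⊆ U → ENNReal.ofReal (ρ h) ≤ c) :
    qiOpen ρ U ≤ c :=
  iSup₂_le fun h hh => H h hh.1 hh.2

lemma qiOpen_mono {U V : Set X} (hUV : U ⊆ V) : qiOpen ρ U ≤ qiOpen ρ V :=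
  qiOpen_le fun _ hh hsupp => le_qiOpen hh (hsupp.trans hUV)

lemma qiMeas_of_isOpen {U : Set X} (hU : IsOpen U) : qiMeas ρ U = qiOpen ρ U := by
  simp [qiMeas, hU]

lemma IsQuasiIntegral.ofReal_le_mul_qiOpen (hρ : IsQuasiIntegral ρ) {h : C_c(X, ℝ)} {a : ℝ}
    {U : Set X} (hh : ∀ x, 0 ≤ h x ∧ h x ≤ a) (hsupp : tsupport h ⊆ U) :
    ENNReal.ofReal (ρ h) ≤ ENNReal.ofReal a * qiOpen ρ U := by
  rcases le_or_gt a 0 with ha | ha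
  · have : h = 0 := by
      ext x
      exact le_antisymm ((hh x).2.trans ha) (hh x).1
    simp [this, hρ.map_zero]
  · have hscaled := le_qiOpen (ρ := ρ) (h := a⁻¹ • h)
      (fun x => ⟨by simpa using mul_nonneg (inv_nonneg.2 ha.le) (hh x).1,
        by simpa [inv_mul_le_one₀ ha] using (hh x).2⟩)
      ((tsupport_smul_subset_right (fun _ => a⁻¹) h).trans hsupp)
    rw [hρ.smul] at hscaled
    calc ENNReal.ofReal (ρ h) = ENNReal.ofReal a * ENNReal.ofReal (a⁻¹ * ρ h) := by
          rw [← ENNReal.ofReal_mul ha.le, mul_inv_cancel_left₀ ha.ne']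
      _ ≤ ENNReal.ofReal a * qiOpen ρ U := by gcongr

lemma IsQuasiIntegral.map_nonpos_of_qiOpen_eq_zero (hρ : IsQuasiIntegral ρ) {h : C_c(X, ℝ)}
    {U : Set X} (hh : ∀ x, 0 ≤ h x) (hsupp : tsupport h ⊆ U) (hU : qiOpen ρ U = 0) :
    ρ h ≤ 0 := by
  obtain ⟨C, hC⟩ := h.hasCompactSupport.exists_bound_of_continuous h.continuous
  have := hρ.ofReal_le_mul_qiOpen (a := C) (fun x => ⟨hh x, (le_abs_self _).trans (hC x)⟩) hsupp
  simpa [hU] using this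

lemma exists_indicator_of_tsupport_subset_union {U V : Set X} (hU : IsOpen U) (hV : IsOpen V)
    (hUV : Disjoint U V) {h : C_c(X, ℝ)} (hsupp : tsupport h ⊆ U ∪ V) :
    ∃ k : C_c(X, ℝ), ⇑k = U.indicator h ∧ tsupport k ⊆ U := by
  have hcl : closure U ∩ tsupport h ⊆ U := fun x ⟨hxU, hxh⟩ =>
    (hsupp hxh).resolve_right fun hxV => (hUV.closure_left hV).notMem_of_mem_left hxU hxV
  have hcont : Continuous (U.indicator h) := by
    classical
    refine h.continuous.piecewise (fun x hx => ?_) continuous_const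
    rw [hU.frontier_eq] at hx
    exact image_eq_zero_of_notMem_tsupport fun hxh => hx.2 (hcl ⟨hx.1, hxh⟩)
  have hs : Function.support (U.indicator h) ⊆ U ∩ Function.support h := support_indicator.subset
  refine ⟨⟨⟨U.indicator h, hcont⟩, h.hasCompactSupport.mono (hs.trans inter_subset_right)⟩,
    rfl, ?_⟩
  refine subset_trans ?_ hcl
  exact closure_minimal (hs.trans (inter_subset_inter subset_closure (subset_tsupport _)))
    (isClosed_closure.inter (isClosed_tsupport _))

lemma IsQuasiIntegral.qiOpen_union (hρ : IsQuasiIntegral ρ) {U V : Set X} (hU : IsOpen U)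
    (hV : IsOpen V) (hUV : Disjoint U V) : qiOpen ρ (U ∪ V) = qiOpen ρ U + qiOpen ρ V := by
  refine le_antisymm (qiOpen_le fun h hh hsupp => ?_) ?_
  · obtain ⟨k₁, hk₁, hsupp₁⟩ := exists_indicator_of_tsupport_subset_union hU hV hUV hsupp
    obtain ⟨k₂, hk₂, hsupp₂⟩ := exists_indicator_of_tsupport_subset_union hV hU hUV.symm
      (union_comm U V ▸ hsupp)
    have hsplit : ∀ x, (k₁ x = h x ∧ k₂ x = 0) ∨ (k₁ x = 0 ∧ k₂ x = h x) := fun x => by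
      simp only [hk₁, hk₂]
      by_cases hxU : x ∈ U
      · simp [hxU, hUV.notMem_of_mem_left hxU]
      · by_cases hxV : x ∈ V
        · simp [hxU, hxV]
        · simp [hxU, hxV, image_eq_zero_of_notMem_tsupport fun hx => (hsupp hx).elim hxU hxV]
    have hbound : ∀ k : C_c(X, ℝ), (∀ x, k x = h x ∨ k x = 0) → ∀ x, 0 ≤ k x ∧ k x ≤ 1 :=
      fun k hk x => by rcases hk x with hx | hx <;> simp [hx, hh x]
    have hb₁ := hbound k₁ fun x => by rcases hsplit x with hx | hx <;> simp [hx]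
    have hb₂ := hbound k₂ fun x => by rcases hsplit x with hx | hx <;> simp [hx]
    have hsum : h = k₁ + k₂ := by
      ext x
      rcases hsplit x with hx | hx <;> simp [hx]
    rw [hsum, hρ.map_add_of_disjoint (fun x => (hb₁ x).1) (fun x => (hb₂ x).1)
      fun x => by rcases hsplit x with hx | hx <;> simp [hx]]
    exact ENNReal.ofReal_add_le.trans (add_le_add (le_qiOpen hb₁ hsupp₁) (le_qiOpen hb₂ hsupp₂))
  · refine ENNReal.biSup_add_biSup_le' ⟨0, by simp⟩ ⟨0, by simp⟩
      fun h₁ ⟨hh₁, hsupp₁⟩ h₂ ⟨hh₂, hsupp₂⟩ => ?_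
    have hd : ∀ x, h₁ x = 0 ∨ h₂ x = 0 := fun x => by
      by_contra! hx
      exact hUV.notMem_of_mem_left (hsupp₁ (subset_tsupport _ hx.1))
        (hsupp₂ (subset_tsupport _ hx.2))
    rw [← ENNReal.ofReal_add (hρ.pos _ fun x => (hh₁ x).1) (hρ.pos _ fun x => (hh₂ x).1),
      ← hρ.map_add_of_disjoint (fun x => (hh₁ x).1) (fun x => (hh₂ x).1) hd]
    refine le_qiOpen (fun x => ?_) ((tsupport_add h₁ h₂).trans (union_subset_union hsupp₁ hsupp₂))
    rcases hd x with hx | hx <;> simp [hx, hh₁ x, hh₂ x]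

lemma IsQuasiIntegral.ofReal_mul_qiOpen_le (hρ : IsQuasiIntegral ρ) {g : C_c(X, ℝ)}
    (hg : ∀ x, 0 ≤ g x) {t : ℝ} (ht : 0 < t) :
    ENNReal.ofReal t * qiOpen ρ {x | t < g x} ≤ ENNReal.ofReal (ρ g) := by
  simp only [qiOpen, ENNReal.mul_iSup]
  refine iSup₂_le fun h ⟨hh, hsupp⟩ => ?_
  let w := compCc ⟨fun s => min (s / t) 1, by fun_prop⟩ (by simp) g
  have hw : ∀ x, 0 ≤ w x ∧ w x ≤ 1 := fun x =>
    ⟨le_min (div_nonneg (hg x) ht.le) zero_le_one, min_le_right _ _⟩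
  have hw1 : ∀ x ∈ {x | t < g x}, w x = 1 := fun x hx =>
    min_eq_right ((one_le_div ht).2 (le_of_lt hx))
  have htw : ρ (t • w) ≤ ρ g := hρ.mono_of_inB ((inB_compCc _ _ g).smul t) (inB_self g) fun x => by
    change t * min (g x / t) 1 ≤ g x
    rw [mul_min_of_nonneg _ _ ht.le, mul_div_cancel₀ _ ht.ne', mul_one]
    exact min_le_left _ _
  rw [hρ.smul] at htw
  rw [← ENNReal.ofReal_mul ht.le]
  exact ENNReal.ofReal_le_ofReal
    ((mul_le_mul_of_nonneg_left (hρ.map_le_of_eq_one_on hh hsupp hw hw1) ht.le).trans htw)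

lemma IsQuasiIntegral.map_le_of_qiOpen_eq_zero (hρ : IsQuasiIntegral ρ)
    (huniv : qiOpen ρ univ ≤ 1) {g : C_c(X, ℝ)} {s : ℝ} (hs : 0 ≤ s)
    (hnull : qiOpen ρ {x | s < g x} = 0) : ρ g ≤ s := by
  refine le_of_forall_gt_imp_ge_of_dense fun s' hs' => ?_
  have hs'0 : 0 < s' := hs.trans_lt hs'
  let low := compCc ⟨fun r => min (max r 0) s', by fun_prop⟩ (by simp [hs'0.le]) g
  let high := compCc ⟨fun r => max (r - s') 0, by fun_prop⟩ (by simp [hs'0.le]) g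
  have hlow : ρ low ≤ s' := by
    have := hρ.ofReal_le_mul_qiOpen (h := low) (a := s')
      (fun x => ⟨le_min (le_max_right _ _) hs'0.le, min_le_right _ _⟩) (subset_univ _)
    rw [← ENNReal.ofReal_le_ofReal_iff hs'0.le]
    exact this.trans (mul_le_of_le_one_right' huniv)
  have hhigh : ρ high ≤ 0 := by
    refine hρ.map_nonpos_of_qiOpen_eq_zero (fun x => le_max_right _ _) ?_ hnull
    refine (closure_minimal (fun x (hx : high x ≠ 0) => ?_)
      (isClosed_le continuous_const g.continuous)).trans fun x (hx : s' ≤ g x) => hs'.trans_le hx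
    show s' ≤ g x
    by_contra! hgx
    exact hx (max_eq_right (by linarith))
  calc ρ g ≤ ρ (low + high) :=
        hρ.mono_of_inB (inB_self g) ((inB_compCc _ _ g).add (inB_compCc _ _ g)) fun x => by
          change g x ≤ min (max (g x) 0) s' + max (g x - s') 0
          rcases le_total (g x) s' with h | h <;> simp [h]
    _ = ρ low + ρ high := hρ.add g _ _ (inB_compCc _ _ g) (inB_compCc _ _ g)
    _ ≤ s' := by linarith

lemma IsSimpleQI.qiOpen_eq_zero_or_one (hS : IsSimpleQI ρ) {U : Set X} (hU : IsOpen U) :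
    qiOpen ρ U = 0 ∨ qiOpen ρ U = 1 := by
  simpa [qiMeas_of_isOpen hU] using hS U (Or.inl hU)

lemma IsSimpleQI.qiOpen_le_one (hS : IsSimpleQI ρ) {U : Set X} (hU : IsOpen U) :
    qiOpen ρ U ≤ 1 := by
  rcases hS.qiOpen_eq_zero_or_one hU with h | h <;> simp [h]

lemma IsSimpleQI.qiOpen_eq_one_of_subset (hS : IsSimpleQI ρ) {U V : Set X} (hV : IsOpen V)
    (hUV : U ⊆ V) (hU : qiOpen ρ U = 1) : qiOpen ρ V = 1 :=
  le_antisymm (hS.qiOpen_le_one hV) (hU ▸ qiOpen_mono hUV)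

lemma IsSimpleQI.qiOpen_eq_zero_of_disjoint (hS : IsSimpleQI ρ) (hρ : IsQuasiIntegral ρ)
    {U V : Set X} (hU : IsOpen U) (hV : IsOpen V) (hUV : Disjoint U V) (hU1 : qiOpen ρ U = 1) :
    qiOpen ρ V = 0 := by
  refine (hS.qiOpen_eq_zero_or_one hV).resolve_right fun hV1 => ?_
  have := hS.qiOpen_le_one (hU.union hV)
  rw [hρ.qiOpen_union hU hV hUV, hU1, hV1] at this
  norm_num at this

lemma IsSimpleQI.le_map_of_qiOpen_eq_one (hS : IsSimpleQI ρ) (hρ : IsQuasiIntegral ρ)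
    {f : C_c(X, ℝ)} {t : ℝ} (h1 : qiOpen ρ {x | t < f x} = 1) : t ≤ ρ f := by
  have hpos : max t 0 ≤ ρ f⁺ := by
    rcases le_or_gt t 0 with ht | ht
    · rw [max_eq_right ht]
      exact hρ.pos _ fun x => le_max_right _ _
    · have hset : {x | t < f⁺ x} = {x | t < f x} := by
        ext x
        change t < max (f x) 0 ↔ t < f x
        simp [ht.not_gt]
      have := hρ.ofReal_mul_qiOpen_le (g := f⁺) (fun x => le_max_right _ _) ht
      rwa [hset, h1, mul_one, ENNReal.ofReal_le_ofReal_iff (hρ.pos _ fun x => le_max_right _ _),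
        ← max_eq_left ht.le] at this
  have hneg : ρ f⁻ ≤ max (-t) 0 := by
    refine le_of_forall_gt_imp_ge_of_dense fun s hs =>
      hρ.map_le_of_qiOpen_eq_zero (hS.qiOpen_le_one isOpen_univ) ((le_max_right _ _).trans hs.le) ?_
    refine hS.qiOpen_eq_zero_of_disjoint hρ (isOpen_lt continuous_const f.continuous)
      (isOpen_lt continuous_const f⁻.continuous) ?_ h1
    refine disjoint_left.2 fun x (hx : t < f x) (hx' : s < max (-f x) 0) => ?_
    rw [max_lt_iff] at hs
    rcases le_total (f x) 0 with h | h <;> simp [h] at hx' <;> linarith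
  rw [hρ.map_posPart_sub_negPart f, ← max_zero_sub_max_neg_zero_eq_self t]
  linarith

lemma IsSimpleQI.map_le_of_qiOpen_eq_one (hS : IsSimpleQI ρ) (hρ : IsQuasiIntegral ρ)
    {f : C_c(X, ℝ)} {t : ℝ} (h1 : qiOpen ρ {x | f x < t} = 1) : ρ f ≤ t := by
  have := hS.le_map_of_qiOpen_eq_one hρ (f := -f) (t := -t) (by simpa using h1)
  rw [hρ.map_neg] at this
  linarith

lemma IsSimpleQI.qiOpen_superlevel_eq_zero (hS : IsSimpleQI ρ) (hρ : IsQuasiIntegral ρ)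
    {f : C_c(X, ℝ)} {t : ℝ} (ht : ρ f < t) : qiOpen ρ {x | t < f x} = 0 :=
  (hS.qiOpen_eq_zero_or_one (isOpen_lt continuous_const f.continuous)).resolve_right
    fun h1 => (hS.le_map_of_qiOpen_eq_one hρ h1).not_gt ht

lemma IsSimpleQI.qiOpen_sublevel_eq_zero (hS : IsSimpleQI ρ) (hρ : IsQuasiIntegral ρ)
    {f : C_c(X, ℝ)} {t : ℝ} (ht : t < ρ f) : qiOpen ρ {x | f x < t} = 0 :=
  (hS.qiOpen_eq_zero_or_one (isOpen_lt f.continuous continuous_const)).resolve_right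
    fun h1 => (hS.map_le_of_qiOpen_eq_one hρ h1).not_gt ht

/-- Were `μ {|f - c| < δ} = 0` for `c = ρ f`, the tent `τ` of height `δ` at `c` would have
`ρ (τ ∘ f) = 0`, while `f - τ ∘ f` exceeds `c - δ / 2` only where `f > c + δ / 4`, a `μ`-null set;
so `c = ρ (f - τ ∘ f) ≤ c - δ / 2`. -/
lemma IsSimpleQI.qiOpen_abs_sub_lt_eq_one (hS : IsSimpleQI ρ) (hρ : IsQuasiIntegral ρ)
    {f : C_c(X, ℝ)} (hf : ρ f ≠ 0) {δ : ℝ} (hδ : 0 < δ) :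
    qiOpen ρ {x | |f x - ρ f| < δ} = 1 := by
  wlog hpos : 0 < ρ f generalizing f
  · have hneg : 0 < ρ (-f) := by
      rw [hρ.map_neg]
      exact neg_pos.2 (lt_of_le_of_ne (not_lt.1 hpos) hf)
    convert this hneg.ne' hneg using 4 with x
    rw [hρ.map_neg, CompactlySupportedContinuousMap.neg_apply, ← abs_neg]
    ring_nf
  have hopen : ∀ r, IsOpen {x | |f x - ρ f| < r} := fun r =>
    isOpen_lt (by fun_prop) continuous_const
  wlog hδc : δ ≤ ρ f generalizing δ
  · exact hS.qiOpen_eq_one_of_subset (hopen δ) (fun x (hx : |f x - ρ f| < ρ f) =>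
      hx.trans (not_le.1 hδc)) (this hpos le_rfl)
  set c := ρ f with hc
  by_contra hne
  have hnull := (hS.qiOpen_eq_zero_or_one (hopen δ)).resolve_right hne
  have huniv := hS.qiOpen_le_one isOpen_univ
  let τ : C(ℝ, ℝ) := ⟨fun s => max (δ - |s - c|) 0, by fun_prop⟩
  have hτ0 : τ 0 = 0 := max_eq_right (by simp [abs_of_pos hpos, hδc])
  let θ : C(ℝ, ℝ) := ContinuousMap.id ℝ - τ
  have hθ0 : θ 0 = 0 := by simp [θ, hτ0]
  have hsplit : c = ρ (compCc θ hθ0 f) + ρ (compCc τ hτ0 f) := by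
    rw [hc, ← hρ.add f _ _ (inB_compCc _ _ f) (inB_compCc _ _ f)]
    congr 1
    ext x
    simp [θ, compCc]
  have hτ : ρ (compCc τ hτ0 f) ≤ 0 := by
    refine hρ.map_le_of_qiOpen_eq_zero huniv le_rfl (le_zero_iff.1 ?_)
    refine hnull ▸ qiOpen_mono fun x (hx : 0 < max (δ - |f x - c|) 0) => ?_
    change |f x - c| < δ
    rw [lt_max_iff] at hx
    rcases hx with hx | hx <;> linarith
  have hθ : ρ (compCc θ hθ0 f) ≤ c - δ / 2 := by
    refine hρ.map_le_of_qiOpen_eq_zero huniv (by linarith) (le_zero_iff.1 ?_)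
    rw [← hS.qiOpen_superlevel_eq_zero hρ (show c < c + δ / 4 by linarith)]
    refine qiOpen_mono fun x (hx : c - δ / 2 < f x - max (δ - |f x - c|) 0) => ?_
    change c + δ / 4 < f x
    by_contra! hfx
    have := le_max_left (δ - |f x - c|) 0
    rcases le_total c (f x) with h | h
    · rw [abs_of_nonneg (sub_nonneg.2 h)] at this hx
      linarith
    · rw [abs_of_nonpos (sub_nonpos.2 h)] at this hx
      linarith
  linarith

lemma IsSimpleQI.map_compCc_le (hS : IsSimpleQI ρ) (hρ : IsQuasiIntegral ρ) (φ : C(ℝ, ℝ))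
    (hφ : φ 0 = 0) (f : C_c(X, ℝ)) : ρ (compCc φ hφ f) ≤ φ (ρ f) := by
  set c := ρ f
  refine le_of_forall_pos_le_add fun ε hε => ?_
  obtain ⟨η, hη, hφη⟩ := Metric.continuous_iff.1 φ.continuous c ε hε
  have hnear : ∀ x, |f x - c| < η → |φ (f x) - φ c| < ε := fun x hx => by
    simpa only [Real.dist_eq] using hφη (f x) (by rwa [Real.dist_eq])
  rcases le_or_gt 0 (φ c + ε) with ht | ht
  · refine hρ.map_le_of_qiOpen_eq_zero (hS.qiOpen_le_one isOpen_univ) ht (le_zero_iff.1 ?_)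
    have hfar : {x | φ c + ε < compCc φ hφ f x} ⊆ {x | f x < c - η / 2} ∪ {x | c + η / 2 < f x} :=
      fun x (hx : φ c + ε < φ (f x)) => by
        have : ¬ |f x - c| < η := fun h => by linarith [(abs_lt.1 (hnear x h)).2]
        rw [not_lt, le_abs'] at this
        rcases this with h | h
        · exact Or.inl (show f x < c - η / 2 by linarith)
        · exact Or.inr (show c + η / 2 < f x by linarith)
    have hdisj : Disjoint {x | f x < c - η / 2} {x | c + η / 2 < f x} :=
      disjoint_left.2 fun x (h₁ : f x < c - η / 2) (h₂ : c + η / 2 < f x) => by linarith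
    calc qiOpen ρ {x | φ c + ε < compCc φ hφ f x}
        ≤ qiOpen ρ ({x | f x < c - η / 2} ∪ {x | c + η / 2 < f x}) := qiOpen_mono hfar
      _ = 0 := by
        rw [hρ.qiOpen_union (U := {x | f x < c - η / 2}) (V := {x | c + η / 2 < f x})
          (isOpen_lt f.continuous continuous_const) (isOpen_lt continuous_const f.continuous) hdisj,
          hS.qiOpen_sublevel_eq_zero hρ (by linarith),
          hS.qiOpen_superlevel_eq_zero hρ (by linarith), add_zero]
  · have hc : c ≠ 0 := fun hc => by rw [hc, hφ] at ht; linarith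
    refine hS.map_le_of_qiOpen_eq_one hρ (hS.qiOpen_eq_one_of_subset
      (isOpen_lt (compCc φ hφ f).continuous continuous_const) (fun x hx => ?_)
      (hS.qiOpen_abs_sub_lt_eq_one hρ hc hη))
    show φ (f x) < φ c + ε
    linarith [(abs_lt.1 (hnear x hx)).2]

theorem IsSimpleQI.map_compCc (hS : IsSimpleQI ρ) (hρ : IsQuasiIntegral ρ) (φ : C(ℝ, ℝ))
    (hφ : φ 0 = 0) (f : C_c(X, ℝ)) : ρ (compCc φ hφ f) = φ (ρ f) := by
  refine le_antisymm (hS.map_compCc_le hρ φ hφ f) ?_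
  have h := hS.map_compCc_le hρ (-φ) (by simp [hφ]) f
  rwa [show compCc (-φ) _ f = -compCc φ hφ f from rfl, hρ.map_neg, ContinuousMap.neg_apply,
    neg_le_neg_iff] at h

lemma IsQuasiIntegral.qiOpen_eq_zero_or_one_of_map_mul_self (hρ : IsQuasiIntegral ρ)
    (hsq : ∀ h, ρ (h * h) = ρ h * ρ h) (U : Set X) : qiOpen ρ U = 0 ∨ qiOpen ρ U = 1 := by
  have hle : ∀ h : C_c(X, ℝ), (∀ x, 0 ≤ h x ∧ h x ≤ 1) → ρ h ≤ 1 := fun h hh => by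
    have hsq_le : ρ (h * h) ≤ ρ h :=
      hρ.mono_of_inB ⟨⟨fun s => s * s, by fun_prop⟩, by simp, fun _ => rfl⟩ (inB_self h)
        fun x => mul_le_of_le_one_right (hh x).1 (hh x).2
    nlinarith [hsq h, hρ.pos h fun x => (hh x).1]
  have hm1 : qiOpen ρ U ≤ 1 := qiOpen_le fun h hh _ => ENNReal.ofReal_le_one.2 (hle h hh)
  have hm2 : qiOpen ρ U ≤ qiOpen ρ U * qiOpen ρ U := qiOpen_le fun h hh hsupp => by
    let k := compCc ⟨Real.sqrt, Real.continuous_sqrt⟩ Real.sqrt_zero h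
    have hk : ∀ x, 0 ≤ k x ∧ k x ≤ 1 := fun x =>
      ⟨Real.sqrt_nonneg _, Real.sqrt_le_one.2 (hh x).2⟩
    have hksupp : tsupport k ⊆ U := (closure_mono fun x (hx : k x ≠ 0) (h0 : h x = 0) =>
      hx (by simp [k, compCc, h0])).trans hsupp
    have hkk : k * k = h := by
      ext x
      exact Real.mul_self_sqrt (hh x).1
    rw [← hkk, hsq, ENNReal.ofReal_mul (hρ.pos k fun x => (hk x).1)]
    exact mul_le_mul' (le_qiOpen hk hksupp) (le_qiOpen hk hksupp)
  rcases eq_or_ne (qiOpen ρ U) 0 with h0 | h0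
  · exact Or.inl h0
  · refine Or.inr (le_antisymm hm1 ?_)
    rwa [← ENNReal.mul_le_mul_iff_right h0 (ne_top_of_le_ne_top ENNReal.one_ne_top hm1), mul_one]

lemma IsQuasiIntegral.isSimpleQI_of_map_mul_self (hρ : IsQuasiIntegral ρ)
    (hsq : ∀ h, ρ (h * h) = ρ h * ρ h) : IsSimpleQI ρ := by
  intro A _
  by_cases hA : IsOpen A
  · rw [qiMeas_of_isOpen hA]
    exact hρ.qiOpen_eq_zero_or_one_of_map_mul_self hsq A
  rw [qiMeas, if_neg hA]
  by_cases hone : ∀ U, IsOpen U ∧ A ⊆ U → qiOpen ρ U = 1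
  · exact Or.inr (le_antisymm ((iInf₂_le univ ⟨isOpen_univ, subset_univ A⟩).trans
      (hone _ ⟨isOpen_univ, subset_univ A⟩).le) (le_iInf₂ fun U hU => (hone U hU).ge))
  · obtain ⟨U, hU, hU1⟩ := not_forall₂.1 hone
    have hU0 := (hρ.qiOpen_eq_zero_or_one_of_map_mul_self hsq U).resolve_right hU1
    exact Or.inl (le_zero_iff.1 ((iInf₂_le U hU).trans hU0.le))

lemma map_mul_of_map_compCc
    (hcomp : ∀ (φ : C(ℝ, ℝ)) (hφ : φ 0 = 0) (f : C_c(X, ℝ)), ρ (compCc φ hφ f) = φ (ρ f))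
    (f g h : C_c(X, ℝ)) (hg : InB f g) (hh : InB f h) : ρ (g * h) = ρ g * ρ h := by
  obtain ⟨φ, hφ0, hφ⟩ := hg
  obtain ⟨ψ, hψ0, hψ⟩ := hh
  have hg' : g = compCc φ hφ0 f := CompactlySupportedContinuousMap.ext hφ
  have hh' : h = compCc ψ hψ0 f := CompactlySupportedContinuousMap.ext hψ
  have hgh : g * h = compCc (φ * ψ) (by simp [hφ0]) f := by
    ext x
    simp [hφ, hψ, compCc]
  rw [hgh, hcomp, hg', hh', hcomp, hcomp, ContinuousMap.mul_apply]

end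

theorem statement1_general {X : Type*} [TopologicalSpace X] (ρ : C_c(X, ℝ) → ℝ)
    (hρ : IsQuasiIntegral ρ) :
    (IsSimpleQI ρ ↔
      ∀ (φ : C(ℝ, ℝ)) (hφ : φ 0 = 0) (f : C_c(X, ℝ)), ρ (compCc φ hφ f) = φ (ρ f)) ∧
    (IsSimpleQI ρ ↔
      ∀ f g h : C_c(X, ℝ), InB f g → InB f h → ρ (g * h) = ρ g * ρ h) := by
  have mul_of_simple : IsSimpleQI ρ → _ := fun hS => map_mul_of_map_compCc (hS.map_compCc hρ)
  have simple_of_mul : (∀ f g h : C_c(X, ℝ), InB f g → InB f h → ρ (g * h) = ρ g * ρ h) →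
      IsSimpleQI ρ := fun hmul =>
    hρ.isSimpleQI_of_map_mul_self fun h => hmul h h h (inB_self h) (inB_self h)
  exact ⟨⟨fun hS => hS.map_compCc hρ, simple_of_mul ∘ map_mul_of_map_compCc⟩,
    ⟨mul_of_simple, simple_of_mul⟩⟩

theorem statement1 {X : Type*} [TopologicalSpace X] [LocallyCompactSpace X] [T2Space X]
    [ConnectedSpace X] (ρ : C_c(X, ℝ) → ℝ) (hρ : IsQuasiIntegral ρ) :
    (IsSimpleQI ρ ↔
      ∀ (φ : C(ℝ, ℝ)) (hφ : φ 0 = 0) (f : C_c(X, ℝ)), ρ (compCc φ hφ f) = φ (ρ f)) ∧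
    (IsSimpleQI ρ ↔
      ∀ f g h : C_c(X, ℝ), InB f g → InB f h → ρ (g * h) = ρ g * ρ h) :=
  statement1_general ρ hρ

end QLF
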